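/- arXiv:1910.02536 — 3 statements merged into one kernel-verified Lean document; each statement's English description precedes it below -/
import Mathlib

section
/- For a continuous curve f : ℝ → ℝⁿ and real numbers a < b, the 1-dimensional Hausdorff content of f([a,b]) equals the diameter of f([a,b]). -/
open ENNReal MeasureTheory

/-- 1-dimensional Hausdorff content: infimum over countable covers of the
sum of diameters. -/
noncomputable def hContent {n : ℕ} (F : Set (EuclideanSpace ℝ (Fin n))) : ℝ≥0∞ :=
  ⨅ (U : ℕ → Set (EuclideanSpace ℝ (Fin n))) (_ : F ⊆ ⋃ i, U i),
    ∑' i, EMetric.diam (U i)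

theorem hContent_image_Icc_eq_diam {n : ℕ}
    (f : ℝ → EuclideanSpace ℝ (Fin n)) (hf : Continuous f)
    (a b : ℝ) (hab : a < b) :
    hContent (f '' Set.Icc a b) = EMetric.diam (f '' Set.Icc a b) := by
  set F := f '' Set.Icc a b with hF
  have hconn : IsPreconnected F := isPreconnected_Icc.image f hf.continuousOn
  apply le_antisymm
  · have h : hContent F ≤
        ∑' i, EMetric.diam ((fun i => if i = 0 then F else (∅ : Set _)) i) := by
      refine iInf_le_of_le _ (iInf_le_of_le ?_ le_rfl)
      intro z hz
      exact Set.mem_iUnion.2 ⟨0, by simpa using hz⟩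
    refine h.trans ?_
    rw [tsum_eq_single 0]
    · simp
    · intro i hi; simp [hi]; exact Metric.ediam_empty
  · refine le_iInf fun U => le_iInf fun hU => ?_
    refine (EMetric.diam_le_iff (s := F)).2 ?_
    intro x hx y hy
    have hIcc : Set.Icc (dist x x) (dist x y) ⊆ (fun z => dist x z) '' F :=
      hconn.intermediate_value hx hy
        ((continuous_const.dist continuous_id).continuousOn)
    rw [dist_self] at hIcc
    calc edist x y = volume (Set.Icc (0:ℝ) (dist x y)) := by
          rw [Real.volume_Icc, edist_dist]; simp
      _ ≤ volume ((fun z => dist x z) '' F) := measure_mono hIcc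
      _ ≤ volume (⋃ i, (fun z => dist x z) '' (U i ∩ F)) := by
          refine measure_mono (Set.image_subset_iff.2 fun z hz => ?_)
          obtain ⟨i, hi⟩ := Set.mem_iUnion.1 (hU hz)
          exact Set.mem_iUnion.2 ⟨i, Set.mem_image_of_mem _ ⟨hi, hz⟩⟩
      _ ≤ ∑' i, volume ((fun z => dist x z) '' (U i ∩ F)) := measure_iUnion_le _
      _ ≤ ∑' i, EMetric.diam (U i) := by
          refine ENNReal.tsum_le_tsum fun i => ?_
          refine (Real.volume_le_diam _).trans ?_
          refine le_trans ?_ (EMetric.diam_mono (Set.inter_subset_left (t := F)))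
          simpa using (LipschitzWith.dist_right x).ediam_image_le (U i ∩ F)
end

section
/- Let f : ℝ → ℝⁿ be continuous, x ∈ ℝ and r > 0. If there exists ε > 0 with f(x+ε) ∉ B(f(x),r) or f(x−ε) ∉ B(f(x),r), then r ≤ ℋ¹_∞(f(ℝ) ∩ B(f(x),r)) ≤ 2r. -/
open ENNReal

/-!
The upper bound comes from covering the set by the ball itself. For the lower bound, project
onto the distance to the centre `f x`: this map is `1`-Lipschitz, so it cannot increase
Hausdorff content, which on `ℝ` dominates Lebesgue measure; and since `f` is continuous and
leaves the ball, the intermediate value theorem shows that the projection covers `[0, r)`.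
-/

open Set Metric MeasureTheory

section hContent

variable {n : ℕ}

theorem hContent_le_ediam {F U : Set (EuclideanSpace ℝ (Fin n))} (hFU : F ⊆ U) :
    hContent F ≤ ediam U := by
  refine (iInf₂_le (fun i : ℕ => if i = 0 then U else ∅) ?_).trans_eq ?_
  · exact hFU.trans (subset_iUnion_of_subset 0 subset_rfl)
  · change ∑' i : ℕ, ediam (if i = 0 then U else ∅) = ediam U
    simp only [apply_ite ediam, ediam_empty]
    exact tsum_ite_eq 0 _

theorem volume_image_le_hContent {g : EuclideanSpace ℝ (Fin n) → ℝ} (hg : LipschitzWith 1 g)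
    (F : Set (EuclideanSpace ℝ (Fin n))) : volume (g '' F) ≤ hContent F := by
  refine le_iInf₂ fun U hU => ?_
  calc volume (g '' F) ≤ volume (⋃ i, g '' U i) := by
        rw [← image_iUnion]; exact measure_mono (image_mono hU)
    _ ≤ ∑' i, volume (g '' U i) := measure_iUnion_le _
    _ ≤ ∑' i, ediam (U i) := ENNReal.tsum_le_tsum fun i =>
        (Real.volume_le_diam _).trans (by simpa using hg.ediam_image_le (U i))

end hContent

theorem IsPreconnected.Ico_subset_image_dist_inter_ball {X : Type*} [PseudoMetricSpace X]
    {s : Set X} (hs : IsPreconnected s) {c y : X} (hc : c ∈ s) (hy : y ∈ s) {r : ℝ}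
    (hr : r ≤ dist y c) : Ico 0 r ⊆ (dist · c) '' (s ∩ ball c r) := by
  rintro t ⟨ht₀, htr⟩
  obtain ⟨z, hz, rfl⟩ : t ∈ (dist · c) '' s :=
    hs.intermediate_value hc hy (by fun_prop : Continuous (dist · c)).continuousOn
      ⟨by simpa using ht₀, by linarith⟩
  exact ⟨z, ⟨hz, htr⟩, rfl⟩

theorem hContent_ball_bounds_general {n : ℕ}
    (f : ℝ → EuclideanSpace ℝ (Fin n)) (hf : Continuous f)
    (x r : ℝ)
    (hexit : ∃ ε > 0, f (x + ε) ∉ Metric.ball (f x) r ∨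
      f (x - ε) ∉ Metric.ball (f x) r) :
    ENNReal.ofReal r ≤ hContent (Set.range f ∩ Metric.ball (f x) r) ∧
      hContent (Set.range f ∩ Metric.ball (f x) r) ≤ ENNReal.ofReal (2 * r) := by
  obtain ⟨y, hy, hyr⟩ : ∃ y ∈ range f, r ≤ dist y (f x) := by
    obtain ⟨ε, -, h | h⟩ := hexit
    exacts [⟨_, mem_range_self _, not_lt.1 h⟩, ⟨_, mem_range_self _, not_lt.1 h⟩]
  constructor
  · calc ENNReal.ofReal r = volume (Ico 0 r) := by simp
      _ ≤ volume ((dist · (f x)) '' (range f ∩ ball (f x) r)) := measure_mono <|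
          (isPreconnected_range hf).Ico_subset_image_dist_inter_ball (mem_range_self x) hy hyr
      _ ≤ _ := volume_image_le_hContent (LipschitzWith.dist_left (f x)) _
  · calc hContent (range f ∩ ball (f x) r) ≤ ediam (ball (f x) r) :=
          hContent_le_ediam inter_subset_right
      _ ≤ 2 * ENNReal.ofReal r := by rw [← eball_ofReal]; exact ediam_eball_le
      _ = ENNReal.ofReal (2 * r) := by rw [ENNReal.ofReal_mul zero_le_two, ofReal_ofNat]

theorem hContent_ball_bounds {n : ℕ}
    (f : ℝ → EuclideanSpace ℝ (Fin n)) (hf : Continuous f)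
    (x r : ℝ) (hr : 0 < r)
    (hexit : ∃ ε > 0, f (x + ε) ∉ Metric.ball (f x) r ∨
      f (x - ε) ∉ Metric.ball (f x) r) :
    ENNReal.ofReal r ≤ hContent (Set.range f ∩ Metric.ball (f x) r) ∧
      hContent (Set.range f ∩ Metric.ball (f x) r) ≤ ENNReal.ofReal (2 * r) :=
  hContent_ball_bounds_general f hf x r hexit
end

section
/- Let f : ℝ → ℝⁿ be continuous with image F = f(ℝ), let x ∈ ℝ and 𝕍 ∈ 𝕊^{n−1}. If for every φ > 0, lim_{r→0} ℋ¹_∞((F ∩ B(f(x),r)) \ S_D(f(x),𝕍,φ)) / r = 0, then for every φ > 0 there exists δ > 0 such that f((x−δ, x+δ)) ⊂ S_D(f(x), 𝕍, φ). -/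
open ENNReal

open Set Filter

/-- The closed double cone with vertex `p`, direction `V` and opening `φ`:
the closure of the set of points `y` such that `y - p` makes an angle at most
`φ/2` with `V` or with `-V`. -/
def doubleCone {n : ℕ} (p V : EuclideanSpace ℝ (Fin n)) (φ : ℝ) :
    Set (EuclideanSpace ℝ (Fin n)) :=
  closure {y | InnerProductGeometry.angle (y - p) V ≤ φ / 2 ∨
    InnerProductGeometry.angle (y - p) (-V) ≤ φ / 2}

/-!
Suppose `f t`, for `t` close to `x`, lies outside the cone of opening `ψ`, at distance `d` from
`f x`. Following the curve from `t` towards `x` until it first meets the cone of opening `ψ / 2`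
or leaves `B(f x, 2d)` gives a connected piece of the curve in `B(f x, 2d)`, outside the
narrower cone, whose closure joins `f t` to a point at distance at least `d · min 1 (sin (ψ/4))`
from it. A connected set has Hausdorff content at least its diameter, so the content ratio at
radius `2d` is at least `min 1 (sin (ψ/4)) / 2`, which is incompatible with the hypothesis as
`d → 0`.
-/

open InnerProductGeometry RealInnerProductSpace Metric

section InnerProduct

variable {E : Type*} [NormedAddCommGroup E] [InnerProductSpace ℝ E]

theorem norm_mul_sin_le_norm_sub_of_le_angle {y z : E} {θ : ℝ} (hθ : 0 ≤ θ)
    (hθyz : θ ≤ angle y z) : ‖y‖ * Real.sin θ ≤ ‖y - z‖ := by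
  have hcos : ⟪y, z⟫ ≤ Real.cos θ * (‖y‖ * ‖z‖) := by
    rw [← cos_angle_mul_norm_mul_norm]
    gcongr
    exact Real.cos_le_cos_of_nonneg_of_le_pi hθ (angle_le_pi y z) hθyz
  -- `‖y - z‖² ≥ (‖z‖ - ‖y‖ cos θ)² + (‖y‖ sin θ)²`
  have hsq : (‖y‖ * Real.sin θ) ^ 2 ≤ ‖y - z‖ ^ 2 := by
    rw [norm_sub_sq_real]
    nlinarith [sq_nonneg (‖z‖ - ‖y‖ * Real.cos θ), Real.sin_sq_add_cos_sq θ]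
  exact le_of_sq_le_sq (by simpa using hsq) (norm_nonneg _)

end InnerProduct

section DoubleCone

variable {n : ℕ} {p V y z : EuclideanSpace ℝ (Fin n)} {φ : ℝ}

theorem doubleCone_mono {φ₁ φ₂ : ℝ} (h : φ₁ ≤ φ₂) :
    doubleCone p V φ₁ ⊆ doubleCone p V φ₂ := by
  refine closure_mono fun y hy => hy.imp (·.trans ?_) (·.trans ?_) <;> linarith

theorem vertex_mem_doubleCone (hV : V ≠ 0) (hφ : 0 ≤ φ) : p ∈ doubleCone p V φ := by
  unfold doubleCone
  have hray : p ∈ closure ((fun t : ℝ => p + t • V) '' Ioi 0) := by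
    have hcont : Continuous fun t : ℝ => p + t • V := by fun_prop
    have h0 : (0 : ℝ) ∈ closure (Ioi 0) := by rw [closure_Ioi]; exact self_mem_Ici
    simpa using hcont.continuousWithinAt.mem_closure_image h0
  refine closure_mono ?_ hray
  rintro _ ⟨t, ht, rfl⟩
  left
  rw [add_sub_cancel_left, angle_smul_left_of_pos _ _ ht, angle_self hV]
  linarith

theorem le_angle_of_notMem_doubleCone (hy : y ∉ doubleCone p V φ)
    (hz : angle (z - p) V ≤ φ / 4 ∨ angle (z - p) (-V) ≤ φ / 4) :
    φ / 4 ≤ angle (y - p) (z - p) := by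
  have hy' : φ / 2 < angle (y - p) V ∧ φ / 2 < angle (y - p) (-V) := by
    have h := mt (@subset_closure _ _ _ y) hy
    simpa only [mem_ofPred_eq, not_or, not_le] using h
  rcases hz with hz | hz
  · linarith [angle_le_angle_add_angle (y - p) (z - p) V]
  · linarith [angle_le_angle_add_angle (y - p) (z - p) (-V)]

theorem norm_sub_mul_sin_le_dist_of_notMem_doubleCone (hφ : 0 ≤ φ)
    (hy : y ∉ doubleCone p V φ) (hz : z ∈ doubleCone p V (φ / 2)) :
    ‖y - p‖ * Real.sin (φ / 4) ≤ dist y z := by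
  have hclosed : IsClosed {z | ‖y - p‖ * Real.sin (φ / 4) ≤ dist y z} :=
    isClosed_le continuous_const (continuous_const.dist continuous_id)
  refine hclosed.closure_subset_iff.2 (fun w hw => ?_) hz
  have hw' : angle (w - p) V ≤ φ / 4 ∨ angle (w - p) (-V) ≤ φ / 4 := by
    simpa only [mem_ofPred_eq, div_div, show (2 : ℝ) * 2 = 4 by norm_num] using hw
  have := norm_mul_sin_le_norm_sub_of_le_angle (by linarith) (le_angle_of_notMem_doubleCone hy hw')
  rwa [sub_sub_sub_cancel_right, ← dist_eq_norm] at this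

end DoubleCone

section Content

theorem IsPreconnected.edist_le_tsum_ediam {X : Type*} [PseudoMetricSpace X] {A : Set X}
    (hA : IsPreconnected A) {a b : X} (ha : a ∈ A) (hb : b ∈ A) {U : ℕ → Set X}
    (hU : A ⊆ ⋃ i, U i) : edist a b ≤ ∑' i, ediam (U i) := by
  -- `dist · b` is 1-Lipschitz and maps `A` onto an interval containing `[0, dist a b]`
  have hg : LipschitzWith 1 (dist · b) := LipschitzWith.dist_left b
  have hIcc : Icc 0 (dist a b) ⊆ (dist · b) '' A := by
    simpa using (hA.image _ hg.continuous.continuousOn).Icc_subset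
      (mem_image_of_mem _ hb) (mem_image_of_mem _ ha)
  calc edist a b = MeasureTheory.volume (Icc 0 (dist a b)) := by
        rw [Real.volume_Icc, sub_zero, edist_dist]
    _ ≤ MeasureTheory.volume (⋃ i, (dist · b) '' U i) :=
        MeasureTheory.measure_mono (hIcc.trans (image_iUnion ▸ image_mono hU))
    _ ≤ ∑' i, MeasureTheory.volume ((dist · b) '' U i) := MeasureTheory.measure_iUnion_le _
    _ ≤ ∑' i, ediam (U i) := ENNReal.tsum_le_tsum fun i =>
        (Real.volume_le_diam _).trans (by simpa using hg.ediam_image_le (U i))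

variable {n : ℕ}

theorem IsPreconnected.ediam_le_hContent {A : Set (EuclideanSpace ℝ (Fin n))}
    (hA : IsPreconnected A) : ediam A ≤ hContent A :=
  ediam_le fun _ ha _ hb => le_iInf₂ fun _ hU => hA.edist_le_tsum_ediam ha hb hU

theorem hContent_mono {A B : Set (EuclideanSpace ℝ (Fin n))} (hAB : A ⊆ B) :
    hContent A ≤ hContent B :=
  le_iInf₂ fun U hU => iInf₂_le U (hAB.trans hU)

end Content

section Escape

variable {X : Type*} [TopologicalSpace X] {f : ℝ → X} {K : Set X} {x t : ℝ}

theorem Continuous.exists_isPreconnected_subset_range_diff_of_lt (hf : Continuous f)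
    (hK : IsClosed K) (hxt : x < t) (hx : f x ∈ K) (ht : f t ∉ K) :
    ∃ A, IsPreconnected A ∧ A ⊆ range f \ K ∧ f t ∈ A ∧ (closure A ∩ K).Nonempty := by
  set S := Icc x t ∩ f ⁻¹' K
  have hS : IsCompact S := isCompact_Icc.inter_right (hK.preimage hf)
  have hsS : sSup S ∈ S := hS.sSup_mem ⟨x, ⟨le_rfl, hxt.le⟩, hx⟩
  have hst : sSup S < t := hsS.1.2.lt_of_ne fun h => ht (h ▸ hsS.2)
  refine ⟨f '' Ioc (sSup S) t, isPreconnected_Ioc.image f hf.continuousOn, ?_,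
    ⟨t, ⟨hst, le_rfl⟩, rfl⟩, f (sSup S), ?_, hsS.2⟩
  · rintro _ ⟨u, hu, rfl⟩
    exact ⟨mem_range_self u, fun huK =>
      hu.1.not_ge (le_csSup hS.bddAbove ⟨⟨hsS.1.1.trans hu.1.le, hu.2⟩, huK⟩)⟩
  · refine image_closure_subset_closure_image hf ⟨sSup S, ?_, rfl⟩
    rw [closure_Ioc hst.ne]
    exact ⟨le_rfl, hst.le⟩

theorem Continuous.exists_isPreconnected_subset_range_diff (hf : Continuous f)
    (hK : IsClosed K) (hxt : x ≠ t) (hx : f x ∈ K) (ht : f t ∉ K) :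
    ∃ A, IsPreconnected A ∧ A ⊆ range f \ K ∧ f t ∈ A ∧ (closure A ∩ K).Nonempty := by
  rcases hxt.lt_or_gt with hlt | hgt
  · exact hf.exists_isPreconnected_subset_range_diff_of_lt hK hlt hx ht
  · -- reflect the parameter so that `t` lies to the right of `x`
    obtain ⟨A, hA, hAsub, htA, hAK⟩ :=
      (hf.comp (continuous_sub_left (t + x))).exists_isPreconnected_subset_range_diff_of_lt
        hK hgt (by simpa using hx) (by simpa using ht)
    refine ⟨A, hA, hAsub.trans (sdiff_subset_sdiff_left (range_comp_subset_range _ _)), ?_, hAK⟩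
    simpa using htA

end Escape

theorem dist_mul_le_hContent_diff_doubleCone {n : ℕ} {f : ℝ → EuclideanSpace ℝ (Fin n)}
    (hf : Continuous f) {x t : ℝ} {V : EuclideanSpace ℝ (Fin n)} (hV : V ≠ 0) {ψ : ℝ}
    (hψ : 0 ≤ ψ) (ht : f t ∉ doubleCone (f x) V ψ) :
    ENNReal.ofReal (dist (f t) (f x) * min 1 (Real.sin (ψ / 4))) ≤
      hContent ((range f ∩ ball (f x) (2 * dist (f t) (f x))) \ doubleCone (f x) V (ψ / 2)) := by
  set d := dist (f t) (f x)
  set K := doubleCone (f x) V (ψ / 2) ∪ (ball (f x) (2 * d))ᶜ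
  have hd : 0 < d := dist_pos.2 fun h => ht (h ▸ vertex_mem_doubleCone hV hψ)
  have hxK : f x ∈ K := Or.inl (vertex_mem_doubleCone hV (by linarith))
  have htK : f t ∉ K := by
    rintro (hcone | hfar)
    · exact ht (doubleCone_mono (by linarith) hcone)
    · exact hfar (mem_ball.2 (by linarith))
  obtain ⟨A, hA, hAK, htA, k, hkA, hkK⟩ :=
    hf.exists_isPreconnected_subset_range_diff (isClosed_closure.union isOpen_ball.isClosed_compl)
      (by rintro rfl; exact htK hxK) hxK htK
  have hk : d * min 1 (Real.sin (ψ / 4)) ≤ dist (f t) k := by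
    rcases hkK with hcone | hfar
    · calc d * min 1 (Real.sin (ψ / 4)) ≤ ‖f t - f x‖ * Real.sin (ψ / 4) := by
            rw [← dist_eq_norm]; gcongr; exact min_le_right _ _
        _ ≤ dist (f t) k := norm_sub_mul_sin_le_dist_of_notMem_doubleCone hψ ht hcone
    · have : 2 * d ≤ dist k (f x) := not_lt.1 hfar
      calc d * min 1 (Real.sin (ψ / 4)) ≤ d := mul_le_of_le_one_right hd.le (min_le_left _ _)
        _ ≤ dist (f t) k := by linarith [dist_triangle_left k (f x) (f t)]
  have hAsub : A ⊆ (range f ∩ ball (f x) (2 * d)) \ doubleCone (f x) V (ψ / 2) :=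
    fun a ha => ⟨⟨(hAK ha).1, not_not.1 fun h => (hAK ha).2 (Or.inr h)⟩,
      fun h => (hAK ha).2 (Or.inl h)⟩
  calc ENNReal.ofReal (d * min 1 (Real.sin (ψ / 4))) ≤ edist (f t) k := by
        rw [edist_dist]; exact ENNReal.ofReal_le_ofReal hk
    _ ≤ ediam (closure A) := edist_le_ediam_of_mem (subset_closure htA) hkA
    _ = ediam A := ediam_closure A
    _ ≤ hContent A := hA.ediam_le_hContent
    _ ≤ _ := hContent_mono hAsub

theorem geometric_tangent_implies_parametric {n : ℕ}
    (f : ℝ → EuclideanSpace ℝ (Fin n)) (hf : Continuous f)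
    (x : ℝ) (V : EuclideanSpace ℝ (Fin n)) (hV : ‖V‖ = 1)
    (h : ∀ φ > 0, Tendsto
      (fun r : ℝ =>
        hContent ((Set.range f ∩ Metric.ball (f x) r) \ doubleCone (f x) V φ) /
          ENNReal.ofReal r)
      (nhdsWithin 0 (Ioi 0)) (nhds 0)) :
    ∀ φ > 0, ∃ δ > 0, f '' Ioo (x - δ) (x + δ) ⊆ doubleCone (f x) V φ := by
  intro φ hφ
  have hV0 : V ≠ 0 := norm_ne_zero_iff.1 (hV ▸ one_ne_zero)
  -- cap the opening at `π` so that `sin (ψ / 4) > 0`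
  set ψ := min φ Real.pi
  have hψ : 0 < ψ := lt_min hφ Real.pi_pos
  set c := min 1 (Real.sin (ψ / 4))
  have hc : 0 < c := lt_min one_pos (Real.sin_pos_of_pos_of_lt_pi (by positivity)
    (by linarith [min_le_right φ Real.pi, Real.pi_pos]))
  obtain ⟨r₀, hr₀, hsmall⟩ : ∃ r₀ > 0, ∀ r ∈ Ioo 0 r₀,
      hContent ((range f ∩ ball (f x) r) \ doubleCone (f x) V (ψ / 2)) / ENNReal.ofReal r <
        ENNReal.ofReal (c / 2) := mem_nhdsGT_iff_exists_Ioo_subset.1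
    ((h (ψ / 2) (by positivity)).eventually_lt_const (ofReal_pos.2 (half_pos hc)))
  obtain ⟨δ, hδ, hclose⟩ := Metric.continuous_iff.1 hf x (r₀ / 2) (half_pos hr₀)
  refine ⟨δ, hδ, ?_⟩
  rintro _ ⟨t, ht, rfl⟩
  refine doubleCone_mono (min_le_left φ Real.pi) (not_not.1 fun hout => ?_)
  have hd : 0 < dist (f t) (f x) :=
    dist_pos.2 fun h => hout (h ▸ vertex_mem_doubleCone hV0 hψ.le)
  have hnear : dist (f t) (f x) < r₀ / 2 := hclose t (by rwa [← Real.ball_eq_Ioo] at ht)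
  refine (hsmall (2 * dist (f t) (f x)) ⟨by linarith, by linarith⟩).not_ge ?_
  rw [ENNReal.le_div_iff_mul_le (Or.inl (ofReal_pos.2 (by positivity)).ne')
    (Or.inl ofReal_ne_top), ← ENNReal.ofReal_mul (half_pos hc).le]
  convert dist_mul_le_hContent_diff_doubleCone hf hV0 hψ.le hout using 2
  ring
end
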